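/- arXiv:0806.4668 — 3 statements merged into one kernel-verified Lean document; each statement's English description precedes it below -/
import Mathlib

section
/- Let r > 0, let κ = 1/4 and η = 3/4, and let a = (a₁, a₂, a₃, a₄) ∈ ℝ⁴. If h_r'(κ; a) = h_r'(η; a) = h_r(κ; a) = h_r(η; a) = 0, then a_j = a_j⁻ for j = 1, 2, 3, 4. -/
noncomputable section

open Real Filter

/-- Rankin's auxiliary function `h_r(t; a) = t^r − a₁t − a₂t² − a₃t³ − a₄t⁴`,
where `t ^ r` is the real power. -/
def hfun (r a₁ a₂ a₃ a₄ t : ℝ) : ℝ :=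
  t ^ r - a₁ * t - a₂ * t ^ 2 - a₃ * t ^ 3 - a₄ * t ^ 4

/-- The derivative in `t` of `h_r(t; a)`:
`h_r'(t; a) = r·t^{r−1} − a₁ − 2a₂t − 3a₃t² − 4a₄t³`. -/
def hfun' (r a₁ a₂ a₃ a₄ t : ℝ) : ℝ :=
  r * t ^ (r - 1) - a₁ - 2 * a₂ * t - 3 * a₃ * t ^ 2 - 4 * a₄ * t ^ 3

def P1m (r κ η : ℝ) : ℝ := ((4 - r) * κ + (r - 2) * η) * κ ^ (r - 1) * η ^ 2

def P2m (r κ η : ℝ) : ℝ :=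
  ((2 * r - 8) * κ ^ 2 + (1 - r) * κ * η + (1 - r) * η ^ 2) * κ ^ (r - 2) * η

def P3m (r κ η : ℝ) : ℝ :=
  ((4 - r) * κ ^ 2 + (4 - r) * κ * η + 2 * (r - 1) * η ^ 2) * κ ^ (r - 2)

def P4m (r κ η : ℝ) : ℝ := ((r - 3) * κ + (1 - r) * η) * κ ^ (r - 2)

/-- `κ₋ = 1/4`. -/
def κm : ℝ := 1 / 4

/-- `η₋ = 3/4`. -/
def ηm : ℝ := 3 / 4

def a1m (r : ℝ) : ℝ := (P1m r κm ηm - P1m r ηm κm) / (κm - ηm) ^ 3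

def a2m (r : ℝ) : ℝ := (P2m r κm ηm - P2m r ηm κm) / (κm - ηm) ^ 3

def a3m (r : ℝ) : ℝ := (P3m r κm ηm - P3m r ηm κm) / (κm - ηm) ^ 3

def a4m (r : ℝ) : ℝ := (P4m r κm ηm - P4m r ηm κm) / (κm - ηm) ^ 3

/-- If `h_r(·; a)` and its derivative both vanish at `κ₋ = 1/4` and `η₋ = 3/4`,
then the coefficients `a₁, a₂, a₃, a₄` are the Rankin coefficients `a_j⁻`. -/
theorem rankin_coeff_minus (r : ℝ) (hr : 0 < r) (a₁ a₂ a₃ a₄ : ℝ)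
    (hd₁ : hfun' r a₁ a₂ a₃ a₄ (1 / 4) = 0) (hd₂ : hfun' r a₁ a₂ a₃ a₄ (3 / 4) = 0)
    (hv₁ : hfun r a₁ a₂ a₃ a₄ (1 / 4) = 0) (hv₂ : hfun r a₁ a₂ a₃ a₄ (3 / 4) = 0) :
    a₁ = a1m r ∧ a₂ = a2m r ∧ a₃ = a3m r ∧ a₄ = a4m r := by
  have h1 : (1/4:ℝ)^(r-1) = 4*(1/4:ℝ)^r := by
    rw [Real.rpow_sub (by norm_num : (0:ℝ) < 1/4), Real.rpow_one]; ring
  have h2 : (3/4:ℝ)^(r-1) = (4/3)*(3/4:ℝ)^r := by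
    rw [Real.rpow_sub (by norm_num : (0:ℝ) < 3/4), Real.rpow_one]; ring
  have h3 : (1/4:ℝ)^(r-2) = 16*(1/4:ℝ)^r := by
    rw [Real.rpow_sub (by norm_num : (0:ℝ) < 1/4),
      show (2:ℝ) = ((2:ℕ):ℝ) by norm_num, Real.rpow_natCast]
    norm_num; ring
  have h4 : (3/4:ℝ)^(r-2) = (16/9)*(3/4:ℝ)^r := by
    rw [Real.rpow_sub (by norm_num : (0:ℝ) < 3/4),
      show (2:ℝ) = ((2:ℕ):ℝ) by norm_num, Real.rpow_natCast]
    norm_num; ring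
  simp only [hfun, hfun', h1, h2] at hd₁ hd₂ hv₁ hv₂
  simp only [a1m, a2m, a3m, a4m, P1m, P2m, P3m, P4m, κm, ηm, h1, h2, h3, h4]
  refine ⟨?_, ?_, ?_, ?_⟩
  · linear_combination (9/4)*hd₁ + (1/4)*hd₂ - 9*hv₁ - (5/3)*hv₂
  · linear_combination (-15)*hd₁ - (7/3)*hd₂ + 24*hv₁ + (136/9)*hv₂
  · linear_combination 28*hd₁ + (20/3)*hd₂ - 16*hv₁ - (368/9)*hv₂
  · linear_combination (-16)*hd₁ - (16/3)*hd₂ + (256/9)*hv₂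
end
end

section
/- For every r ∈ (0,1) ∪ (2,3) ∪ (4,∞) one has 2r² − 2r + 3 + 2r·3^{r−2} − 11·3^{r−2} > 0 (so that h_r''(1/4; a⁻) > 0); for every r ∈ (1,2) ∪ (3,4) one has 2r² − 2r + 3 + 2r·3^{r−2} − 11·3^{r−2} < 0 (so that h_r''(1/4; a⁻) < 0); and for r ∈ {1, 2, 3, 4} one has 2r² − 2r + 3 + 2r·3^{r−2} − 11·3^{r−2} = 0. -/
/-!
Write the expression as `f r = 2r² - 2r + 3 + (2r - 11)·3^(r-2)`. Differentiating thrice kills the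
quadratic part and keeps the shape `(affine)·3^(r-2)`, so `f'''` vanishes at most once; by Rolle's
theorem `f` then has at most four zeros, which are therefore exactly `1, 2, 3, 4`. On each of the
complementary intervals `f` has constant sign, read off at `0, 3/2, 5/2, 7/2, 5`, where `3^(r-2)`
is a rational multiple of `1` or `√3`.
-/

open Real Set

theorem IsPreconnected.pos_of_ne_zero {s : Set ℝ} (hs : IsPreconnected s) {f : ℝ → ℝ}
    (hf : ContinuousOn f s) (hf0 : ∀ x ∈ s, f x ≠ 0) {t : ℝ} (ht : t ∈ s) (hft : 0 < f t)
    {x : ℝ} (hx : x ∈ s) : 0 < f x := by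
  by_contra! hfx
  obtain ⟨y, hy, hfy⟩ := hs.intermediate_value hx ht hf ⟨hfx, hft.le⟩
  exact hf0 y hy hfy

theorem IsPreconnected.neg_of_ne_zero {s : Set ℝ} (hs : IsPreconnected s) {f : ℝ → ℝ}
    (hf : ContinuousOn f s) (hf0 : ∀ x ∈ s, f x ≠ 0) {t : ℝ} (ht : t ∈ s) (hft : f t < 0)
    {x : ℝ} (hx : x ∈ s) : f x < 0 :=
  neg_pos.1 <| hs.pos_of_ne_zero (f := fun x ↦ -f x) hf.neg
    (fun y hy ↦ neg_ne_zero.2 (hf0 y hy)) ht (neg_pos.2 hft) hx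

theorem exists_strictMono_zeros_of_hasDerivAt {f f' : ℝ → ℝ}
    (hf : ∀ x, HasDerivAt f (f' x) x) {n : ℕ} {x : Fin (n + 1) → ℝ} (hx : StrictMono x)
    (hzero : ∀ i, f (x i) = 0) :
    ∃ y : Fin n → ℝ, StrictMono y ∧ ∀ i, f' (y i) = 0 := by
  have hcont : Continuous f := continuous_iff_continuousAt.2 fun x ↦ (hf x).continuousAt
  have hrolle (i : Fin n) : ∃ c ∈ Ioo (x i.castSucc) (x i.succ), f' c = 0 :=
    exists_hasDerivAt_eq_zero (hx Fin.castSucc_lt_succ) hcont.continuousOn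
      (by rw [hzero, hzero]) fun c _ ↦ hf c
  choose y hy hy0 using hrolle
  refine ⟨y, fun i j hij ↦ ?_, hy0⟩
  calc y i < x i.succ := (hy i).2
    _ ≤ x j.castSucc := hx.monotone (Fin.succ_le_castSucc_iff.2 hij)
    _ < y j := (hy j).1

/-- An exponential polynomial with frequencies `0` and `log c`, a family closed under `deriv`. -/
noncomputable def expPoly (α β γ a b c d r : ℝ) : ℝ :=
  α * r ^ 2 + β * r + γ + (a * r + b) * c ^ (r - d)

section ExpPoly

variable {α β γ a b c d : ℝ}

theorem hasDerivAt_expPoly (hc : 0 < c) (x : ℝ) :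
    HasDerivAt (expPoly α β γ a b c d)
      (expPoly 0 (2 * α) β (log c * a) (a + log c * b) c d x) x := by
  have hexp : HasDerivAt (fun r ↦ c ^ (r - d)) (c ^ (x - d) * log c) x := by
    simpa using (hasStrictDerivAt_const_rpow hc (x - d)).hasDerivAt.comp_sub_const x d
  have hquad :=
    (((hasDerivAt_pow 2 x).const_mul α).add ((hasDerivAt_id x).const_mul β)).add_const γ
  have := hquad.add ((((hasDerivAt_id x).const_mul a).add_const b).mul hexp)
  refine this.congr_deriv ?_
  simp only [expPoly, id]
  push_cast
  ring

theorem continuous_expPoly (hc : 0 < c) : Continuous (expPoly α β γ a b c d) :=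
  continuous_iff_continuousAt.2 fun x ↦ (hasDerivAt_expPoly hc x).continuousAt

theorem expPoly_zero_eq_zero_iff (hc : 0 < c) (r : ℝ) :
    expPoly 0 0 0 a b c d r = 0 ↔ a * r + b = 0 := by
  simp [expPoly, (rpow_pos_of_pos hc _).ne']

theorem expPoly_not_strictMono_zeros (hc : 0 < c) (hc1 : c ≠ 1) (ha : a ≠ 0)
    {x : Fin 5 → ℝ} (hx : StrictMono x) : ¬ ∀ i, expPoly α β γ a b c d (x i) = 0 := by
  intro hzero
  have hL : log c ≠ 0 := log_ne_zero_of_pos_of_ne_one hc hc1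
  obtain ⟨x₁, hx₁, hzero₁⟩ :=
    exists_strictMono_zeros_of_hasDerivAt (hasDerivAt_expPoly hc) hx hzero
  obtain ⟨x₂, hx₂, hzero₂⟩ :=
    exists_strictMono_zeros_of_hasDerivAt (hasDerivAt_expPoly hc) hx₁ hzero₁
  obtain ⟨x₃, hx₃, hzero₃⟩ :=
    exists_strictMono_zeros_of_hasDerivAt (hasDerivAt_expPoly hc) hx₂ hzero₂
  simp only [mul_zero, expPoly_zero_eq_zero_iff hc] at hzero₃
  have hslope : log c * (log c * (log c * a)) ≠ 0 := by positivity
  exact zero_ne_one (hx₃.injective (a₁ := 0) (a₂ := 1)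
    (mul_left_cancel₀ hslope (by linarith [hzero₃ 0, hzero₃ 1])))

theorem card_le_four_of_expPoly_eq_zero (hc : 0 < c) (hc1 : c ≠ 1) (ha : a ≠ 0)
    {s : Finset ℝ} (hs : ∀ x ∈ s, expPoly α β γ a b c d x = 0) : s.card ≤ 4 := by
  by_contra! h
  obtain ⟨t, hts, ht⟩ := Finset.exists_subset_card_eq (show 5 ≤ s.card by omega)
  exact expPoly_not_strictMono_zeros hc hc1 ha (t.orderEmbOfFin ht).strictMono
    fun i ↦ hs _ (hts (t.orderEmbOfFin_mem ht i))

end ExpPoly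

/-- `4 ^ r / 8` times `h_r''(1/4; a⁻)`. -/
noncomputable def secondDerivAtQuarter (r : ℝ) : ℝ := expPoly 2 (-2) 3 2 (-11) 3 2 r

theorem secondDerivAtQuarter_eq_zero_iff (r : ℝ) :
    secondDerivAtQuarter r = 0 ↔ r ∈ ({1, 2, 3, 4} : Set ℝ) := by
  constructor
  · intro hr
    by_contra hr'
    have hzeros : ∀ x ∈ ({r, 1, 2, 3, 4} : Finset ℝ), secondDerivAtQuarter x = 0 := by
      simp only [Finset.mem_insert, Finset.mem_singleton]
      rintro x (rfl | rfl | rfl | rfl | rfl)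
      · exact hr
      all_goals norm_num [secondDerivAtQuarter, expPoly]
    have hcard := card_le_four_of_expPoly_eq_zero (by norm_num : (0 : ℝ) < 3)
      (by norm_num : (3 : ℝ) ≠ 1) (by norm_num : (2 : ℝ) ≠ 0) hzeros
    simp only [Set.mem_insert_iff, Set.mem_singleton_iff, not_or] at hr'
    rw [Finset.card_insert_of_notMem (by simpa using hr')] at hcard
    norm_num at hcard
  · rintro (rfl | rfl | rfl | rfl) <;> norm_num [secondDerivAtQuarter, expPoly]

theorem secondDerivAtQuarter_zero_pos : 0 < secondDerivAtQuarter 0 := by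
  norm_num [secondDerivAtQuarter, expPoly]

theorem secondDerivAtQuarter_three_halves_neg : secondDerivAtQuarter (3 / 2) < 0 := by
  rw [secondDerivAtQuarter, expPoly, show (3 / 2 : ℝ) - 2 = -(1 / 2) by norm_num,
    rpow_neg (by norm_num), ← sqrt_eq_rpow]
  have h3 : √3 ^ 2 = 3 := sq_sqrt (by norm_num)
  have : 0 < √3 := by positivity
  field_simp
  nlinarith

theorem secondDerivAtQuarter_five_halves_pos : 0 < secondDerivAtQuarter (5 / 2) := by
  rw [secondDerivAtQuarter, expPoly, show (5 / 2 : ℝ) - 2 = 1 / 2 by norm_num, ← sqrt_eq_rpow]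
  have h3 : √3 ^ 2 = 3 := sq_sqrt (by norm_num)
  nlinarith [sqrt_nonneg 3]

theorem secondDerivAtQuarter_seven_halves_neg : secondDerivAtQuarter (7 / 2) < 0 := by
  rw [secondDerivAtQuarter, expPoly, show (7 / 2 : ℝ) - 2 = 1 + 1 / 2 by norm_num,
    rpow_add (by norm_num), rpow_one, ← sqrt_eq_rpow]
  have h3 : √3 ^ 2 = 3 := sq_sqrt (by norm_num)
  nlinarith [sqrt_nonneg 3]

theorem secondDerivAtQuarter_five_pos : 0 < secondDerivAtQuarter 5 := by
  norm_num [secondDerivAtQuarter, expPoly]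

theorem secondDerivAtQuarter_pos_of_mem {s : Set ℝ} (hs : IsPreconnected s)
    (hs0 : ∀ x ∈ s, x ∉ ({1, 2, 3, 4} : Set ℝ)) {t : ℝ} (ht : t ∈ s)
    (hft : 0 < secondDerivAtQuarter t) {x : ℝ} (hx : x ∈ s) : 0 < secondDerivAtQuarter x :=
  hs.pos_of_ne_zero (continuous_expPoly (by norm_num)).continuousOn
    (fun y hy ↦ (secondDerivAtQuarter_eq_zero_iff y).not.2 (hs0 y hy)) ht hft hx

theorem secondDerivAtQuarter_neg_of_mem {s : Set ℝ} (hs : IsPreconnected s)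
    (hs0 : ∀ x ∈ s, x ∉ ({1, 2, 3, 4} : Set ℝ)) {t : ℝ} (ht : t ∈ s)
    (hft : secondDerivAtQuarter t < 0) {x : ℝ} (hx : x ∈ s) : secondDerivAtQuarter x < 0 :=
  hs.neg_of_ne_zero (continuous_expPoly (by norm_num)).continuousOn
    (fun y hy ↦ (secondDerivAtQuarter_eq_zero_iff y).not.2 (hs0 y hy)) ht hft hx

/-- Sign of `2r² − 2r + 3 + 2r·3^{r−2} − 11·3^{r−2}` (up to the positive factor `8·4^{−r}`,
this is `h_r''(1/4; a⁻)`): positive on `(0,1) ∪ (2,3) ∪ (4,∞)`, negative on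
`(1,2) ∪ (3,4)`, and zero at `r = 1, 2, 3, 4`. -/
theorem sign_second_deriv_quarter (r : ℝ) :
    (r ∈ Set.Ioo (0 : ℝ) 1 ∪ Set.Ioo 2 3 ∪ Set.Ioi 4 →
      0 < 2 * r ^ 2 - 2 * r + 3 + 2 * r * (3 : ℝ) ^ (r - 2) - 11 * (3 : ℝ) ^ (r - 2)) ∧
    (r ∈ Set.Ioo (1 : ℝ) 2 ∪ Set.Ioo 3 4 →
      2 * r ^ 2 - 2 * r + 3 + 2 * r * (3 : ℝ) ^ (r - 2) - 11 * (3 : ℝ) ^ (r - 2) < 0) ∧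
    (r ∈ ({1, 2, 3, 4} : Set ℝ) →
      2 * r ^ 2 - 2 * r + 3 + 2 * r * (3 : ℝ) ^ (r - 2) - 11 * (3 : ℝ) ^ (r - 2) = 0) := by
  have hr : 2 * r ^ 2 - 2 * r + 3 + 2 * r * (3 : ℝ) ^ (r - 2) - 11 * (3 : ℝ) ^ (r - 2) =
      secondDerivAtQuarter r := by
    rw [secondDerivAtQuarter, expPoly]
    ring
  rw [hr]
  refine ⟨?_, ?_, (secondDerivAtQuarter_eq_zero_iff r).2⟩
  · rintro ((⟨-, h⟩ | h) | h)
    · exact secondDerivAtQuarter_pos_of_mem isPreconnected_Iio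
        (fun x hx ↦ by rintro (rfl | rfl | rfl | rfl) <;> norm_num at hx)
        (by norm_num : (0 : ℝ) < 1) secondDerivAtQuarter_zero_pos (mem_Iio.2 h)
    · exact secondDerivAtQuarter_pos_of_mem isPreconnected_Ioo
        (fun x hx ↦ by rintro (rfl | rfl | rfl | rfl) <;> norm_num at hx)
        (by norm_num : (5 / 2 : ℝ) ∈ Ioo 2 3) secondDerivAtQuarter_five_halves_pos h
    · exact secondDerivAtQuarter_pos_of_mem isPreconnected_Ioi
        (fun x hx ↦ by rintro (rfl | rfl | rfl | rfl) <;> norm_num at hx)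
        (by norm_num : (5 : ℝ) ∈ Ioi 4) secondDerivAtQuarter_five_pos h
  · rintro (h | h)
    · exact secondDerivAtQuarter_neg_of_mem isPreconnected_Ioo
        (fun x hx ↦ by rintro (rfl | rfl | rfl | rfl) <;> norm_num at hx)
        (by norm_num : (3 / 2 : ℝ) ∈ Ioo 1 2) secondDerivAtQuarter_three_halves_neg h
    · exact secondDerivAtQuarter_neg_of_mem isPreconnected_Ioo
        (fun x hx ↦ by rintro (rfl | rfl | rfl | rfl) <;> norm_num at hx)
        (by norm_num : (7 / 2 : ℝ) ∈ Ioo 3 4) secondDerivAtQuarter_seven_halves_neg h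
end

section
/- There exists a real constant C such that lim_{σ→1⁺} (Σ_p p^{−σ} − log(1/(σ−1))) = C; that is, Σ_p p^{−σ} = log(1/(σ−1)) + C + o(1) as σ → 1⁺. -/
noncomputable section

open Real Filter

/-
Taking logarithms in the Euler product gives `log ζ(σ) = Σ_p -log (1 - p^{-σ})` for `σ > 1`.
Since `-log (1 - x) = x + O(x²)`, this is `Σ_p p^{-σ}` plus a remainder dominated by
`2 Σ_p p^{-2}`, hence continuous on `[1, ∞)`. As `ζ` has a simple pole with residue `1` at `1`,
`log ζ(σ) = log (1/(σ - 1)) + o(1)`, so `C` is minus the value of the remainder at `σ = 1`.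
-/

theorem Real.abs_neg_log_one_sub_sub_le {x : ℝ} (hx : |x| ≤ 1 / 2) :
    |-log (1 - x) - x| ≤ 2 * x ^ 2 := by
  have htaylor := Real.abs_log_sub_add_sum_range_le (hx.trans_lt (by norm_num)) 1
  norm_num at htaylor
  calc |-log (1 - x) - x| = |x + log (1 - x)| := by rw [← abs_neg]; ring_nf
    _ ≤ x ^ 2 / (1 - |x|) := htaylor
    _ ≤ x ^ 2 / (1 / 2) := by gcongr; linarith
    _ = 2 * x ^ 2 := by ring

theorem Real.rpow_neg_le_one_half {x σ : ℝ} (hx : 2 ≤ x) (hσ : 1 ≤ σ) :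
    x ^ (-σ) ≤ 1 / 2 :=
  calc x ^ (-σ) ≤ x ^ (-1 : ℝ) := rpow_le_rpow_of_exponent_le (by linarith) (by linarith)
    _ = x⁻¹ := rpow_neg_one x
    _ ≤ 1 / 2 := by rw [one_div]; exact inv_anti₀ (by norm_num) hx

theorem Real.abs_neg_log_one_sub_rpow_neg_sub_le {x σ : ℝ} (hx : 2 ≤ x) (hσ : 1 ≤ σ) :
    |-log (1 - x ^ (-σ)) - x ^ (-σ)| ≤ 2 * x ^ (-2 : ℝ) := by
  have hpos : 0 < x ^ (-σ) := rpow_pos_of_pos (by linarith) _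
  have hsmall : |x ^ (-σ)| ≤ 1 / 2 := by
    rw [abs_of_pos hpos]; exact rpow_neg_le_one_half hx hσ
  calc |-log (1 - x ^ (-σ)) - x ^ (-σ)|
    _ ≤ 2 * (x ^ (-σ)) ^ 2 := abs_neg_log_one_sub_sub_le hsmall
    _ = 2 * x ^ (-σ * 2) := by rw [rpow_mul (by linarith), rpow_two]
    _ ≤ 2 * x ^ (-2 : ℝ) := by gcongr <;> linarith

theorem Nat.Primes.two_le_cast (p : Nat.Primes) : (2 : ℝ) ≤ (p : ℕ) := by
  exact_mod_cast p.prop.two_le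

theorem Nat.Primes.cast_ne_zero (p : Nat.Primes) : ((p : ℕ) : ℝ) ≠ 0 := by
  exact_mod_cast p.prop.ne_zero

def primeLogRemainder (σ : ℝ) : ℝ :=
  ∑' p : Nat.Primes, (-log (1 - ((p : ℕ) : ℝ) ^ (-σ)) - ((p : ℕ) : ℝ) ^ (-σ))

theorem summable_two_mul_prime_rpow_neg_two :
    Summable fun p : Nat.Primes => 2 * ((p : ℕ) : ℝ) ^ (-2 : ℝ) :=
  (Nat.Primes.summable_rpow.mpr (by norm_num)).mul_left 2

theorem continuousOn_primeLogRemainder : ContinuousOn primeLogRemainder (Set.Ici 1) := by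
  refine continuousOn_tsum (fun p => ?_) summable_two_mul_prime_rpow_neg_two fun p σ hσ => ?_
  · have hcont : ContinuousOn (fun σ : ℝ => ((p : ℕ) : ℝ) ^ (-σ)) (Set.Ici 1) :=
      (continuous_const.rpow continuous_neg fun _ => Or.inl p.cast_ne_zero).continuousOn
    refine ((continuousOn_const.sub hcont).log fun σ hσ => ?_).neg.sub hcont
    exact (sub_pos.2 ((rpow_neg_le_one_half p.two_le_cast hσ).trans_lt (by norm_num))).ne'
  · exact abs_neg_log_one_sub_rpow_neg_sub_le p.two_le_cast hσ

theorem log_riemannZeta_re_eq_tsum {σ : ℝ} (hσ : 1 < σ) :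
    log (riemannZeta σ).re = ∑' p : Nat.Primes, -log (1 - ((p : ℕ) : ℝ) ^ (-σ)) := by
  have hterm (p : Nat.Primes) : -Complex.log (1 - (p : ℂ) ^ (-(σ : ℂ))) =
      ((-log (1 - ((p : ℕ) : ℝ) ^ (-σ)) : ℝ) : ℂ) := by
    have hpos : 0 < 1 - ((p : ℕ) : ℝ) ^ (-σ) := by
      linarith [rpow_neg_le_one_half p.two_le_cast hσ.le]
    rw [Complex.ofReal_neg, Complex.ofReal_log hpos.le, Complex.ofReal_sub, Complex.ofReal_one,
      Complex.ofReal_cpow (Nat.cast_nonneg _)]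
    push_cast
    rfl
  have heuler := riemannZeta_eulerProduct_exp_log (s := (σ : ℂ)) (by simpa using hσ)
  rw [tsum_congr hterm, ← Complex.ofReal_tsum, ← Complex.ofReal_exp] at heuler
  rw [← heuler, Complex.ofReal_re, log_exp]

theorem log_riemannZeta_re_eq_tsum_add_primeLogRemainder {σ : ℝ} (hσ : 1 < σ) :
    log (riemannZeta σ).re =
      ∑' p : Nat.Primes, ((p : ℕ) : ℝ) ^ (-σ) + primeLogRemainder σ := by
  have hmain : Summable fun p : Nat.Primes => ((p : ℕ) : ℝ) ^ (-σ) :=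
    Nat.Primes.summable_rpow.mpr (by linarith)
  have hrem : Summable fun p : Nat.Primes =>
      -log (1 - ((p : ℕ) : ℝ) ^ (-σ)) - ((p : ℕ) : ℝ) ^ (-σ) :=
    summable_two_mul_prime_rpow_neg_two.of_norm_bounded fun p =>
      abs_neg_log_one_sub_rpow_neg_sub_le p.two_le_cast hσ.le
  rw [log_riemannZeta_re_eq_tsum hσ, primeLogRemainder, ← hmain.tsum_add hrem]
  exact tsum_congr fun p => by ring

/-- Mertens-type estimate: there is a constant `C` such that
`Σ_p p^{−σ} = log(1/(σ−1)) + C + o(1)` as `σ → 1⁺`. -/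
theorem primeSum_log_asymptotic :
    ∃ C : ℝ, Filter.Tendsto
      (fun σ : ℝ => (∑' p : Nat.Primes, ((p : ℕ) : ℝ) ^ (-σ)) - Real.log (1 / (σ - 1)))
      (nhdsWithin 1 (Set.Ioi 1)) (nhds C) := by
  refine ⟨-primeLogRemainder 1, ?_⟩
  have hzeta : Tendsto (fun σ : ℝ => log (riemannZeta σ).re + log (σ - 1))
      (nhdsWithin 1 (Set.Ioi 1)) (nhds 0) :=
    (Asymptotics.isLittleO_one_iff ℝ).1 log_riemannZeta_add_log_sub_isLittleO_ofReal
  have hrem :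
      Tendsto primeLogRemainder (nhdsWithin 1 (Set.Ioi 1)) (nhds (primeLogRemainder 1)) :=
    ((continuousOn_primeLogRemainder 1 Set.self_mem_Ici).mono Set.Ioi_subset_Ici_self).tendsto
  refine (zero_sub (primeLogRemainder 1) ▸ hzeta.sub hrem).congr' ?_
  filter_upwards [self_mem_nhdsWithin] with σ hσ
  rw [log_riemannZeta_re_eq_tsum_add_primeLogRemainder hσ, one_div, log_inv]
  ring
end
end
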